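/- For all integers 1 ≤ ℓ ≤ k there exists a constant C > 0 (depending only on k and ℓ) such that every finite simple graph G satisfies Δ_k^ℓ ≤ C · Δ_ℓ^k, where Δ_k and Δ_ℓ are the numbers of k-cliques and ℓ-cliques of G; that is, the number of k-cliques in a graph with Δ_ℓ ℓ-cliques is O(Δ_ℓ^{k/ℓ}). -/

import Mathlib

/-!
By the Lovász form of the Kruskal–Katona theorem, a `k`-uniform family with at least
`t.choose k` members has an `ℓ`-shadow with at least `t.choose ℓ` members. Every `ℓ`-subset of a
`k`-clique is an `ℓ`-clique, so choosing `t` maximal with `t.choose k ≤ Δ_k` gives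
`Δ_k < (t + 1).choose k ≤ (t + 1) ^ k` and `Δ_ℓ ≥ t.choose ℓ`, which is at least a constant
multiple of `(t + 1) ^ ℓ` because `t ≥ k ≥ ℓ`.
-/

open Finset Nat
open scoped FinsetFamily

namespace Nat

lemma choose_lt_choose_succ {n k : ℕ} (hk : k ≠ 0) (hkn : k ≤ n + 1) :
    n.choose k < (n + 1).choose k := by
  obtain ⟨j, rfl⟩ := exists_eq_add_one_of_ne_zero hk
  rw [choose_succ_succ']
  have := choose_pos (n := n) (k := j) (by omega)
  omega

lemma exists_choose_le_lt_choose_succ {k m n : ℕ} (hk : k ≠ 0) (hm : m ≠ 0)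
    (hmn : m ≤ n.choose k) :
    ∃ t, k ≤ t ∧ t ≤ n ∧ t.choose k ≤ m ∧ m < (t + 1).choose k := by
  have hkn : k ≤ n := by
    by_contra! h
    rw [choose_eq_zero_of_lt h] at hmn
    omega
  let P (s : ℕ) : Prop := s.choose k ≤ m
  have hPk : P k := by simp only [P, choose_self]; omega
  refine ⟨findGreatest P n, le_findGreatest hkn hPk, findGreatest_le n,
    findGreatest_spec hkn hPk, ?_⟩
  rcases (findGreatest_le (P := P) n).lt_or_eq with hlt | heq
  · exact not_le.1 (findGreatest_is_greatest (P := P) (lt_add_one _) hlt)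
  · rw [heq]
    exact hmn.trans_lt (choose_lt_choose_succ hk (by omega))

lemma add_one_pow_le_mul_choose {ℓ t : ℕ} (h : ℓ ≤ t) :
    (t + 1) ^ ℓ ≤ (ℓ + 1) ^ ℓ * ℓ ! * t.choose ℓ := by
  have hlin : t + 1 ≤ (ℓ + 1) * (t + 1 - ℓ) := by
    obtain ⟨d, rfl⟩ := exists_add_of_le h
    rw [show ℓ + d + 1 - ℓ = d + 1 by omega]
    nlinarith
  calc (t + 1) ^ ℓ ≤ ((ℓ + 1) * (t + 1 - ℓ)) ^ ℓ := pow_le_pow_left' hlin ℓ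
    _ = (ℓ + 1) ^ ℓ * (t + 1 - ℓ) ^ ℓ := mul_pow ..
    _ ≤ (ℓ + 1) ^ ℓ * t.descFactorial ℓ := by gcongr; exact pow_sub_le_descFactorial t ℓ
    _ = (ℓ + 1) ^ ℓ * ℓ ! * t.choose ℓ := by
      rw [descFactorial_eq_factorial_mul_choose, mul_assoc]

end Nat

namespace Finset

lemma card_pow_le_card_shadow_iterate_pow {n k ℓ : ℕ} {𝒜 : Finset (Finset (Fin n))}
    (h𝒜 : (𝒜 : Set (Finset (Fin n))).Sized k) (hℓ : ℓ ≠ 0) (hℓk : ℓ ≤ k) :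
    #𝒜 ^ ℓ ≤ ((ℓ + 1) ^ ℓ * ℓ !) ^ k * #(∂^[k - ℓ] 𝒜) ^ k := by
  obtain rfl | h𝒜ne := 𝒜.eq_empty_or_nonempty
  · simp [hℓ]
  obtain ⟨t, hkt, htn, hlow, hhigh⟩ := exists_choose_le_lt_choose_succ (k := k) (by omega)
    h𝒜ne.card_pos.ne' (by simpa using h𝒜.card_le)
  have hKK : t.choose ℓ ≤ #(∂^[k - ℓ] 𝒜) := by
    simpa [Nat.sub_sub_self hℓk] using kruskal_katona_lovasz_form (Nat.sub_le k ℓ) hkt htn h𝒜 hlow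
  calc #𝒜 ^ ℓ ≤ ((t + 1) ^ k) ^ ℓ := by gcongr; exact hhigh.le.trans (choose_le_pow _ _)
    _ = ((t + 1) ^ ℓ) ^ k := pow_right_comm ..
    _ ≤ ((ℓ + 1) ^ ℓ * ℓ ! * t.choose ℓ) ^ k := by
      gcongr; exact add_one_pow_le_mul_choose (hℓk.trans hkt)
    _ ≤ ((ℓ + 1) ^ ℓ * ℓ !) ^ k * #(∂^[k - ℓ] 𝒜) ^ k := by rw [mul_pow]; gcongr

end Finset

namespace SimpleGraph

variable {α : Type*} [Fintype α] [DecidableEq α] (G : SimpleGraph α) [DecidableRel G.Adj]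

lemma shadow_iterate_cliqueFinset_subset {k ℓ : ℕ} (h : ℓ ≤ k) :
    ∂^[k - ℓ] (G.cliqueFinset k) ⊆ G.cliqueFinset ℓ := by
  intro t ht
  obtain ⟨s, hs, hts, hcard⟩ := mem_shadow_iterate_iff_exists_sdiff.1 ht
  rw [mem_cliqueFinset_iff] at hs ⊢
  refine ⟨hs.1.subset hts, ?_⟩
  have := card_sdiff_of_subset hts
  have := card_le_card hts
  have := hs.2
  omega

lemma card_cliqueFinset_pow_le {k ℓ : ℕ} (hℓ : ℓ ≠ 0) (hℓk : ℓ ≤ k) :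
    #(G.cliqueFinset k) ^ ℓ ≤ ((ℓ + 1) ^ ℓ * ℓ !) ^ k * #(G.cliqueFinset ℓ) ^ k := by
  classical
  let H := G.map (Fintype.equivFin α)
  have hcard (r : ℕ) : #(H.cliqueFinset r) = #(G.cliqueFinset r) := by
    rw [cliqueFinset_map_of_equiv, card_map]
  have hsized : (H.cliqueFinset k : Set (Finset (Fin (Fintype.card α)))).Sized k :=
    fun _ hs ↦ (mem_cliqueFinset_iff.1 hs).2
  rw [← hcard, ← hcard]
  calc #(H.cliqueFinset k) ^ ℓ
      ≤ ((ℓ + 1) ^ ℓ * ℓ !) ^ k * #(∂^[k - ℓ] (H.cliqueFinset k)) ^ k :=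
        card_pow_le_card_shadow_iterate_pow hsized hℓ hℓk
    _ ≤ ((ℓ + 1) ^ ℓ * ℓ !) ^ k * #(H.cliqueFinset ℓ) ^ k := by
        gcongr; exact H.shadow_iterate_cliqueFinset_subset hℓk

end SimpleGraph

theorem cliqueCount_pow_le (k ℓ : ℕ) (hℓ : 1 ≤ ℓ) (hk : ℓ ≤ k) :
    ∃ C : ℝ, 0 < C ∧
      ∀ (V : Type) [Fintype V] [DecidableEq V] (G : SimpleGraph V) [DecidableRel G.Adj],
        ((G.cliqueFinset k).card : ℝ) ^ ℓ ≤ C * ((G.cliqueFinset ℓ).card : ℝ) ^ k := by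
  refine ⟨(((ℓ + 1) ^ ℓ * ℓ !) ^ k : ℕ), by positivity, fun V _ _ G _ ↦ ?_⟩
  exact_mod_cast G.card_cliqueFinset_pow_le (by omega) hk
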